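/- arXiv:2206.12977 — 6 statements merged into one kernel-verified Lean document; each statement's English description precedes it below -/
import Mathlib

section
/- Conversion from η-ball robust error to expected ℓ_p robust error: let X be a measurable space, μ a probability measure on X, U : X → Set X a perturbation function with x ∈ U x for every x, and h, f : X → ℝ functions with values in [0,1]. Define G(x) := ⨆_{z ∈ U x} |h z − f x|. Let p ≥ 1 be real, η ∈ [0,1], ε ≥ 0, and assume that x ↦ G(x) and x ↦ ⨆_{z ∈ U x} |h z − f x|^p are measurable. If μ({x : G x > η}) ≤ ε, then ∫ (⨆_{z ∈ U x} |h z − f x|^p) dμ ≤ η^p + ε·(1 − η^p) ≤ η^p + ε. -/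
/-!
Pointwise, the `ℓ_p` robust loss is at most `η ^ p` where the robust absolute loss is at most
`η`, and at most `1` everywhere, since all losses lie in `[0, 1]` and `t ↦ t ^ p` is monotone.
So it is dominated by `η ^ p + (1 - η ^ p) · 𝟙_B` with `B = {G > η}`, and integrating this
bound against the probability measure `μ` with `μ B ≤ ε` gives `η ^ p + ε (1 - η ^ p)`.
-/

open MeasureTheory Set

section SupImage

variable {α : Type*} {s : Set α} {g : α → ℝ}

theorem csSup_image_rpow_le (hs : s.Nonempty) (hg : ∀ a ∈ s, 0 ≤ g a) {c : ℝ}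
    (hgc : ∀ a ∈ s, g a ≤ c) {p : ℝ} (hp : 0 ≤ p) :
    sSup ((fun a => g a ^ p) '' s) ≤ c ^ p :=
  csSup_le (hs.image _) <| by
    rintro _ ⟨a, ha, rfl⟩
    exact Real.rpow_le_rpow (hg a ha) (hgc a ha) hp

theorem csSup_image_rpow_le_add_indicator (hs : s.Nonempty) (hg : ∀ a ∈ s, g a ∈ Icc (0 : ℝ) 1)
    {p : ℝ} (hp : 0 ≤ p) {η : ℝ} {X : Type*} {B : Set X} {x : X}
    (hB : x ∉ B → sSup (g '' s) ≤ η) :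
    sSup ((fun a => g a ^ p) '' s) ≤ η ^ p + B.indicator (fun _ => 1 - η ^ p) x := by
  by_cases hx : x ∈ B
  · rw [indicator_of_mem hx, add_sub_cancel, ← Real.one_rpow p]
    exact csSup_image_rpow_le hs (fun a ha => (hg a ha).1) (fun a ha => (hg a ha).2) hp
  · have hbdd : BddAbove (g '' s) := ⟨1, by rintro _ ⟨a, ha, rfl⟩; exact (hg a ha).2⟩
    rw [indicator_of_notMem hx, add_zero]
    exact csSup_image_rpow_le hs (fun a ha => (hg a ha).1)
      (fun a ha => (le_csSup hbdd (mem_image_of_mem g ha)).trans (hB hx)) hp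

end SupImage

theorem integral_le_add_mul_of_le_add_indicator {X : Type*} [MeasurableSpace X]
    {μ : Measure X} [IsProbabilityMeasure μ] {F : X → ℝ} (hF : 0 ≤ F) {a b ε : ℝ}
    (hb : 0 ≤ b) (hε : 0 ≤ ε) {B : Set X} (hB : μ B ≤ ENNReal.ofReal ε)
    (hFB : ∀ x, F x ≤ a + B.indicator (fun _ => b) x) :
    ∫ x, F x ∂μ ≤ a + ε * b := by
  -- `B` need not be measurable: pass to a measurable hull of the same measure.
  set B' := toMeasurable μ B
  have hB' : MeasurableSet B' := measurableSet_toMeasurable μ B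
  have hle : ∀ x, F x ≤ a + B'.indicator (fun _ => b) x := fun x =>
    (hFB x).trans (add_le_add_right
      (indicator_le_indicator_of_subset (subset_toMeasurable μ B) (fun _ => hb) x) a)
  have hμB' : μ.real B' ≤ ε := by
    rw [measureReal_def, measure_toMeasurable]
    exact ENNReal.toReal_le_of_le_ofReal hε hB
  calc ∫ x, F x ∂μ ≤ ∫ x, (a + B'.indicator (fun _ => b) x) ∂μ :=
        integral_mono_of_nonneg (Filter.Eventually.of_forall hF)
          ((integrable_const a).add ((integrable_const b).indicator hB'))
          (Filter.Eventually.of_forall hle)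
    _ = a + μ.real B' * b := by
        rw [integral_add (integrable_const a) ((integrable_const b).indicator hB'),
          integral_const, integral_indicator_const b hB', probReal_univ, one_smul, smul_eq_mul]
    _ ≤ a + ε * b := by gcongr

theorem lp_robust_error_of_eta_ball_error_general
    {X : Type*} [MeasurableSpace X] (μ : Measure X) [IsProbabilityMeasure μ]
    (U : X → Set X) (hU : ∀ x, x ∈ U x)
    (h f : X → ℝ)
    (hh : ∀ x, h x ∈ Set.Icc (0 : ℝ) 1) (hf : ∀ x, f x ∈ Set.Icc (0 : ℝ) 1)
    (p : ℝ) (hp : 1 ≤ p) (η : ℝ) (hη : η ∈ Set.Icc (0 : ℝ) 1) (ε : ℝ) (hε : 0 ≤ ε)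
    (htail : μ {x | sSup ((fun z => |h z - f x|) '' U x) > η} ≤ ENNReal.ofReal ε) :
    (∫ x, sSup ((fun z => |h z - f x| ^ p) '' U x) ∂μ) ≤ η ^ p + ε * (1 - η ^ p) ∧
    η ^ p + ε * (1 - η ^ p) ≤ η ^ p + ε := by
  have hp0 : 0 ≤ p := zero_le_one.trans hp
  have hηp0 : 0 ≤ η ^ p := Real.rpow_nonneg hη.1 p
  have hηp1 : η ^ p ≤ 1 := Real.rpow_le_one hη.1 hη.2 hp0
  have hloss : ∀ x, ∀ z ∈ U x, |h z - f x| ∈ Icc (0 : ℝ) 1 := fun x z _ =>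
    ⟨abs_nonneg _, abs_sub_le_of_nonneg_of_le (hh z).1 (hh z).2 (hf x).1 (hf x).2⟩
  have hnonneg : 0 ≤ fun x => sSup ((fun z => |h z - f x| ^ p) '' U x) := fun x =>
    Real.sSup_nonneg <| by
      rintro _ ⟨z, -, rfl⟩
      exact Real.rpow_nonneg (abs_nonneg _) p
  refine ⟨integral_le_add_mul_of_le_add_indicator hnonneg (sub_nonneg.2 hηp1) hε htail
    fun x => csSup_image_rpow_le_add_indicator ⟨x, hU x⟩ (hloss x) hp0 fun hx => not_lt.1 hx, ?_⟩
  linarith [mul_nonneg hε hηp0]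

/-- Conversion from `η`-ball robust error to expected `ℓ_p` robust error:
for a perturbation function `U` with `x ∈ U x`, hypothesis `h` and target `f`
with values in `[0,1]`, if the robust absolute loss
`G x = sSup {|h z − f x| : z ∈ U x}` exceeds `η` with probability at most `ε`,
then the expected `ℓ_p` robust loss is at most `η^p + ε·(1 − η^p) ≤ η^p + ε`. -/
theorem lp_robust_error_of_eta_ball_error
    {X : Type*} [MeasurableSpace X] (μ : Measure X) [IsProbabilityMeasure μ]
    (U : X → Set X) (hU : ∀ x, x ∈ U x)
    (h f : X → ℝ)
    (hh : ∀ x, h x ∈ Set.Icc (0 : ℝ) 1) (hf : ∀ x, f x ∈ Set.Icc (0 : ℝ) 1)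
    (p : ℝ) (hp : 1 ≤ p) (η : ℝ) (hη : η ∈ Set.Icc (0 : ℝ) 1) (ε : ℝ) (hε : 0 ≤ ε)
    (hG : Measurable fun x => sSup ((fun z => |h z - f x|) '' U x))
    (hGp : Measurable fun x => sSup ((fun z => |h z - f x| ^ p) '' U x))
    (htail : μ {x | sSup ((fun z => |h z - f x|) '' U x) > η} ≤ ENNReal.ofReal ε) :
    (∫ x, sSup ((fun z => |h z - f x| ^ p) '' U x) ∂μ) ≤ η ^ p + ε * (1 - η ^ p) ∧
    η ^ p + ε * (1 - η ^ p) ≤ η ^ p + ε :=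
  lp_robust_error_of_eta_ball_error_general μ U hU h f hh hf p hp η hη ε hε htail
end

section
/- The weighted median is 1-Lipschitz with respect to the sup-distance of the value vectors: for every T ≥ 1, nonnegative weights α : Fin T → ℝ with total weight W = ∑ i, α i > 0, values a, b : Fin T → ℝ, and δ ≥ 0, if |a i − b i| ≤ δ for every i, then |Med_α(a) − Med_α(b)| ≤ δ. -/
open Finset

/-- The weighted median of values `a : Fin T → ℝ` with weights `α`:
the infimum of all thresholds capturing at least half the total weight. -/
noncomputable def wMed {T : ℕ} (α a : Fin T → ℝ) : ℝ :=
  sInf {t : ℝ | (∑ i, α i) / 2 ≤ ∑ i, if a i ≤ t then α i else 0}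

lemma wMed_aux_nonempty {T : ℕ} (hT : 1 ≤ T) (α a : Fin T → ℝ) (hW : 0 < ∑ i, α i) :
    {t : ℝ | (∑ i, α i) / 2 ≤ ∑ i, if a i ≤ t then α i else 0}.Nonempty := by
  have : Nonempty (Fin T) := Fin.pos_iff_nonempty.mp hT
  have hne : (Finset.univ : Finset (Fin T)).Nonempty := Finset.univ_nonempty
  refine ⟨Finset.univ.sup' hne a, ?_⟩
  have : ∀ i, a i ≤ Finset.univ.sup' hne a := fun i => Finset.le_sup' a (mem_univ i)
  simp only [Set.mem_setOf_eq, if_pos (this _)]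
  linarith

lemma wMed_aux_bdd {T : ℕ} (hT : 1 ≤ T) (α a : Fin T → ℝ) (hW : 0 < ∑ i, α i) :
    BddBelow {t : ℝ | (∑ i, α i) / 2 ≤ ∑ i, if a i ≤ t then α i else 0} := by
  have : Nonempty (Fin T) := Fin.pos_iff_nonempty.mp hT
  have hne : (Finset.univ : Finset (Fin T)).Nonempty := Finset.univ_nonempty
  refine ⟨Finset.univ.inf' hne a, fun t ht => ?_⟩
  by_contra h
  push_neg at h
  have : ∀ i, ¬ a i ≤ t := fun i =>
    not_le.2 (lt_of_lt_of_le h (Finset.inf'_le a (mem_univ i)))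
  simp only [Set.mem_setOf_eq, if_neg (this _), Finset.sum_const_zero] at ht
  linarith

lemma wMed_le {T : ℕ} (hT : 1 ≤ T) (α : Fin T → ℝ) (hα : ∀ i, 0 ≤ α i) (hW : 0 < ∑ i, α i)
    (a b : Fin T → ℝ) (δ : ℝ) (h : ∀ i, a i ≤ b i + δ) :
    wMed α a ≤ wMed α b + δ := by
  have key : wMed α a - δ ≤ wMed α b := by
    apply le_csInf (wMed_aux_nonempty hT α b hW)
    intro t ht
    have hmem : t + δ ∈ {t : ℝ | (∑ i, α i) / 2 ≤ ∑ i, if a i ≤ t then α i else 0} := by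
      simp only [Set.mem_setOf_eq]
      refine le_trans ht (Finset.sum_le_sum fun i _ => ?_)
      by_cases hb : b i ≤ t
      · rw [if_pos hb, if_pos (by linarith [h i])]
      · rw [if_neg hb]
        split <;> [exact hα i ; rfl]
    have := csInf_le (wMed_aux_bdd hT α a hW) hmem
    simpa [wMed] using by linarith [this]
  linarith

/-- The weighted median is 1-Lipschitz with respect to the sup-distance of the
value vectors: if `|a i − b i| ≤ δ` for every `i`, then
`|Med_α a − Med_α b| ≤ δ`. -/
theorem wMed_lipschitz
    (T : ℕ) (hT : 1 ≤ T) (α : Fin T → ℝ) (hα : ∀ i, 0 ≤ α i)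
    (hW : 0 < ∑ i, α i) (a b : Fin T → ℝ) (δ : ℝ) (hδ : 0 ≤ δ)
    (hab : ∀ i, |a i - b i| ≤ δ) :
    |wMed α a - wMed α b| ≤ δ := by
  have h1 : wMed α a ≤ wMed α b + δ :=
    wMed_le hT α hα hW a b δ fun i => by have := abs_le.1 (hab i); linarith [this.2]
  have h2 : wMed α b ≤ wMed α a + δ :=
    wMed_le hT α hα hW b a δ fun i => by have := abs_le.1 (hab i); linarith [this.1]
  rw [abs_le]; constructor <;> linarith
end

section
/- Realizable sample compression generalization (concentration form): let Z be a measurable space, μ a probability measure on Z, k ≤ m natural numbers, and F : Z^k × Z → ℝ a measurable function with 0 ≤ F ≤ 1 (F(w, z) is the loss on z of the predictor reconstructed from the compression tuple w). Then for every ε ∈ (0,1), the μ^m-probability of the set of samples s ∈ Z^m for which there exists a map σ : Fin k → Fin m such that F(s ∘ σ, s j) = 0 for every j : Fin m and ∫ F(s ∘ σ, z) dμ(z) > ε, is at most m^k · (1 − ε)^{m − k}. -/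
open MeasureTheory

/-! For a fixed `σ`, the tuple `s ∘ σ` depends only on the coordinates of `s` in the range of
`σ`; given them, the at least `m - k` remaining coordinates are still independent, and if the
true error of `s ∘ σ` exceeds `ε`, each of them has zero loss with probability at most `1 - ε`,
because `F ≤ 1`. A union bound over the `m ^ k` maps `σ` finishes the proof. -/

section

variable {Z : Type*} [MeasurableSpace Z] (μ : Measure Z) [IsProbabilityMeasure μ]

theorem measure_setOf_eq_zero_le_ofReal_one_sub_integral {f : Z → ℝ} (hf : Measurable f)
    (hf1 : ∀ z, f z ≤ 1) :
    μ {z | f z = 0} ≤ ENNReal.ofReal (1 - ∫ z, f z ∂μ) := by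
  have hzero : MeasurableSet {z | f z = 0} := hf (measurableSet_singleton 0)
  rw [← ofReal_measureReal]
  refine ENNReal.ofReal_le_ofReal ?_
  by_cases hint : Integrable f μ
  · have hle : f ≤ {z | f z = 0}ᶜ.indicator 1 := fun z => by
      by_cases hz : f z = 0 <;> simp [hz, hf1 z]
    have := integral_mono hint ((integrable_const 1).indicator hzero.compl) hle
    rw [integral_indicator_one hzero.compl, probReal_compl_eq_one_sub hzero] at this
    linarith
  · rw [integral_undef hint, sub_zero]
    exact measureReal_le_one

variable {ι κ X : Type*} [Fintype ι] [Fintype κ] [MeasurableSpace X]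

theorem measure_prod_pi_setOf_forall_mem_le (ν : Measure X) [IsProbabilityMeasure ν]
    {A : X → Set Z} (hA : MeasurableSet {p : X × Z | p.2 ∈ A p.1}) {q : ENNReal}
    (hAq : ∀ x, μ (A x) ≤ q) :
    (ν.prod (Measure.pi fun _ : ι => μ)) {p | ∀ i, p.2 i ∈ A p.1} ≤
      q ^ Fintype.card ι := by
  have hmeas : MeasurableSet {p : X × (ι → Z) | ∀ i, p.2 i ∈ A p.1} := by
    simp only [Set.ofPred_forall]
    exact MeasurableSet.iInter fun i =>
      hA.preimage (f := fun p : X × (ι → Z) => (p.1, p.2 i)) (by fun_prop)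
  calc (ν.prod (Measure.pi fun _ : ι => μ)) {p | ∀ i, p.2 i ∈ A p.1}
      = ∫⁻ x, ∏ _i : ι, μ (A x) ∂ν := by
        rw [Measure.prod_apply hmeas]
        congr! with x
        rw [← Measure.pi_pi]
        congr 1
        ext c
        simp
    _ ≤ ∫⁻ _x, q ^ Fintype.card ι ∂ν := lintegral_mono fun x => by
        simpa using pow_le_pow_left' (hAq x) _
    _ = q ^ Fintype.card ι := by simp

theorem measure_pi_setOf_forall_mem_comp_le (σ : κ → ι) {A : (κ → Z) → Set Z}
    (hA : MeasurableSet {p : (κ → Z) × Z | p.2 ∈ A p.1}) {q : ENNReal} (hq : q ≤ 1)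
    (hAq : ∀ w, μ (A w) ≤ q) :
    Measure.pi (fun _ : ι => μ) {s | ∀ i, s i ∈ A (s ∘ σ)} ≤
      q ^ (Fintype.card ι - Fintype.card κ) := by
  classical
  let p : ι → Prop := fun i => ∃ j, σ j = i
  let e := MeasurableEquiv.piEquivPiSubtypeProd (fun _ : ι => Z) p
  let tuple : ({i // p i} → Z) → κ → Z := fun b j => b ⟨σ j, j, rfl⟩
  have hcard : Fintype.card ι - Fintype.card κ ≤ Fintype.card {i // ¬p i} := by
    rw [Fintype.card_subtype_compl]
    exact Nat.sub_le_sub_left (Fintype.card_le_of_surjective (fun j => ⟨σ j, j, rfl⟩)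
      fun ⟨_, j, hj⟩ => ⟨j, Subtype.ext hj⟩) _
  calc Measure.pi (fun _ : ι => μ) {s | ∀ i, s i ∈ A (s ∘ σ)}
      ≤ Measure.pi (fun _ : ι => μ) (e ⁻¹' {x | ∀ i, x.2 i ∈ A (tuple x.1)}) :=
        measure_mono fun s hs i => hs i
    _ = ((Measure.pi fun _ : {i // p i} => μ).prod (Measure.pi fun _ : {i // ¬p i} => μ))
          {x | ∀ i, x.2 i ∈ A (tuple x.1)} :=
        (measurePreserving_piEquivPiSubtypeProd _ p).measure_preimage_equiv _
    _ ≤ q ^ Fintype.card {i // ¬p i} :=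
        measure_prod_pi_setOf_forall_mem_le μ _ (A := A ∘ tuple)
          (hA.preimage (f := fun x : ({i // p i} → Z) × Z => (tuple x.1, x.2)) (by fun_prop))
          fun _ => hAq _
    _ ≤ q ^ (Fintype.card ι - Fintype.card κ) := pow_le_pow_right_of_le_one' hq hcard

theorem measure_pi_setOf_exists_forall_mem_comp_le {A : (κ → Z) → Set Z}
    (hA : MeasurableSet {p : (κ → Z) × Z | p.2 ∈ A p.1}) {q : ENNReal} (hq : q ≤ 1)
    (hAq : ∀ w, μ (A w) ≤ q) :
    Measure.pi (fun _ : ι => μ) {s | ∃ σ : κ → ι, ∀ i, s i ∈ A (s ∘ σ)} ≤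
      Fintype.card ι ^ Fintype.card κ * q ^ (Fintype.card ι - Fintype.card κ) := by
  classical
  rw [Set.ofPred_exists]
  calc Measure.pi (fun _ : ι => μ) (⋃ σ : κ → ι, {s | ∀ i, s i ∈ A (s ∘ σ)})
      ≤ ∑ σ : κ → ι, Measure.pi (fun _ : ι => μ) {s | ∀ i, s i ∈ A (s ∘ σ)} :=
        measure_iUnion_fintype_le _ _
    _ ≤ ∑ _σ : κ → ι, q ^ (Fintype.card ι - Fintype.card κ) :=
        Finset.sum_le_sum fun σ _ => measure_pi_setOf_forall_mem_comp_le μ σ hA hq hAq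
    _ = Fintype.card ι ^ Fintype.card κ * q ^ (Fintype.card ι - Fintype.card κ) := by
        simp

end

theorem realizable_compression_generalization_general
    {Z : Type*} [MeasurableSpace Z] (μ : Measure Z) [IsProbabilityMeasure μ]
    (k m : ℕ)
    (F : (Fin k → Z) × Z → ℝ) (hF : Measurable F)
    (hF1 : ∀ w z, F (w, z) ≤ 1)
    (ε : ℝ) (hε0 : 0 < ε) (hε1 : ε < 1) :
    (Measure.pi fun _ : Fin m => μ)
      {s : Fin m → Z | ∃ σ : Fin k → Fin m,
        (∀ j : Fin m, F (s ∘ σ, s j) = 0) ∧ ε < ∫ z, F (s ∘ σ, z) ∂μ} ≤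
      ENNReal.ofReal ((m : ℝ) ^ k * (1 - ε) ^ (m - k)) := by
  -- the true-error condition is folded into the per-point event
  let A : (Fin k → Z) → Set Z := fun w => {z | F (w, z) = 0 ∧ ε < ∫ z, F (w, z) ∂μ}
  have hA : MeasurableSet {p : (Fin k → Z) × Z | p.2 ∈ A p.1} :=
    (hF (measurableSet_singleton 0)).inter <| measurableSet_lt measurable_const
      (hF.stronglyMeasurable.integral_prod_right'.measurable.comp measurable_fst)
  have hAq : ∀ w, μ (A w) ≤ ENNReal.ofReal (1 - ε) := fun w => by
    by_cases hw : ε < ∫ z, F (w, z) ∂μ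
    · calc μ (A w) ≤ μ {z | F (w, z) = 0} := measure_mono fun z hz => hz.1
        _ ≤ ENNReal.ofReal (1 - ∫ z, F (w, z) ∂μ) :=
          measure_setOf_eq_zero_le_ofReal_one_sub_integral μ (by fun_prop) (hF1 w)
        _ ≤ ENNReal.ofReal (1 - ε) := ENNReal.ofReal_le_ofReal (by linarith)
    · simp [A, hw]
  have hsub : {s : Fin m → Z | ∃ σ : Fin k → Fin m,
      (∀ j : Fin m, F (s ∘ σ, s j) = 0) ∧ ε < ∫ z, F (s ∘ σ, z) ∂μ} ⊆
      {s | ∃ σ : Fin k → Fin m, ∀ j, s j ∈ A (s ∘ σ)} :=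
    fun s ⟨σ, hzero, herr⟩ => ⟨σ, fun j => ⟨hzero j, herr⟩⟩
  have hbound := measure_pi_setOf_exists_forall_mem_comp_le (ι := Fin m) μ hA
    (ENNReal.ofReal_le_one.2 (by linarith)) hAq
  rw [Fintype.card_fin, Fintype.card_fin, ← ENNReal.ofReal_natCast,
    ← ENNReal.ofReal_pow m.cast_nonneg, ← ENNReal.ofReal_pow (by linarith),
    ← ENNReal.ofReal_mul (by positivity)] at hbound
  exact (measure_mono hsub).trans hbound

/-- Realizable sample compression generalization (concentration form): if
`F (w, z) ∈ [0,1]` is the loss at `z` of the predictor reconstructed from the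
compression tuple `w`, then the probability, over an i.i.d. sample `s` of size
`m`, that some compression map `σ : Fin k → Fin m` yields zero loss on the whole
sample yet true error greater than `ε`, is at most `m^k · (1 − ε)^(m − k)`. -/
theorem realizable_compression_generalization
    {Z : Type*} [MeasurableSpace Z] (μ : Measure Z) [IsProbabilityMeasure μ]
    (k m : ℕ) (hkm : k ≤ m)
    (F : (Fin k → Z) × Z → ℝ) (hF : Measurable F)
    (hF0 : ∀ w z, 0 ≤ F (w, z)) (hF1 : ∀ w z, F (w, z) ≤ 1)
    (ε : ℝ) (hε0 : 0 < ε) (hε1 : ε < 1) :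
    (Measure.pi fun _ : Fin m => μ)
      {s : Fin m → Z | ∃ σ : Fin k → Fin m,
        (∀ j : Fin m, F (s ∘ σ, s j) = 0) ∧ ε < ∫ z, F (s ∘ σ, z) ∂μ} ≤
      ENNReal.ofReal ((m : ℝ) ^ k * (1 - ε) ^ (m - k)) :=
  realizable_compression_generalization_general μ k m F hF hF1 ε hε0 hε1
end

section
/- Agnostic sample compression generalization (concentration form): let Z be a measurable space, μ a probability measure on Z, k < m natural numbers, and F : Z^k × Z → ℝ a measurable function with 0 ≤ F ≤ 1. Then for every ε > 0, the μ^m-probability of the set of samples s ∈ Z^m for which there exists an injective map σ : Fin k → Fin m such that | (1/(m − k)) · ∑_{j ∉ range σ} F(s ∘ σ, s j) − ∫ F(s ∘ σ, z) dμ(z) | > ε, is at most 2 · m^k · exp(−2 ε² (m − k)). -/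
/-!
Fix an injective `σ`. Splitting the coordinates of `s` into `range σ` and its complement
(`MeasurableEquiv.piEquivPiSubtypeProd`) and integrating over the first block by Fubini, the
compression tuple `s ∘ σ` is independent of the `m - k` held-out points. Conditionally on it the
held-out losses are i.i.d. in `[0, 1]` with mean `∫ F (s ∘ σ, z) ∂μ`, so Hoeffding's inequality
bounds the probability of an `ε`-deviation by `2 exp (-2 ε² (m - k))`. A union bound over the
at most `m ^ k` maps `σ` finishes the proof.
-/

open MeasureTheory ProbabilityTheory Finset Real

lemma measure_pi_preimage_piEquivPiSubtypeProd_le {ι : Type*} [Fintype ι] {α : ι → Type*}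
    [∀ i, MeasurableSpace (α i)] (μ : ∀ i, Measure (α i)) [∀ i, IsProbabilityMeasure (μ i)]
    (p : ι → Prop) [DecidablePred p]
    {B : Set ((∀ i : Subtype p, α i) × (∀ i : {i // ¬p i}, α i))} (hB : MeasurableSet B)
    {c : ENNReal} (h : ∀ x, Measure.pi (fun i : {i // ¬p i} => μ i) (Prod.mk x ⁻¹' B) ≤ c) :
    Measure.pi μ (MeasurableEquiv.piEquivPiSubtypeProd α p ⁻¹' B) ≤ c := by
  rw [(measurePreserving_piEquivPiSubtypeProd μ p).measure_preimage hB.nullMeasurableSet,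
    Measure.prod_apply hB]
  calc _ ≤ ∫⁻ _, c ∂Measure.pi (fun i : Subtype p => μ i) := lintegral_mono h
    _ = c := by simp

lemma measure_setOf_exists_le_card_mul {Ω α : Type*} [MeasurableSpace Ω] [Fintype α]
    {μ : Measure Ω} {P : α → Prop} {Q : α → Ω → Prop} {c : ENNReal}
    (h : ∀ a, P a → μ {x | Q a x} ≤ c) :
    μ {x | ∃ a, P a ∧ Q a x} ≤ Fintype.card α * c := by
  classical
  calc μ {x | ∃ a, P a ∧ Q a x} = μ (⋃ a ∈ univ.filter P, {x | Q a x}) := by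
        congr 1; ext; simp
    _ ≤ ∑ a ∈ univ.filter P, μ {x | Q a x} := measure_biUnion_finset_le _ _
    _ ≤ (univ.filter P).card • c := sum_le_card_nsmul _ _ _ fun a ha => h a (mem_filter.1 ha).2
    _ ≤ Fintype.card α * c := by
        rw [nsmul_eq_mul]
        gcongr
        exact card_filter_le _ _

section IIDSample

variable {Z ι : Type*} [MeasurableSpace Z] {μ : Measure Z} [IsProbabilityMeasure μ] [Fintype ι]
  {f : Z → ℝ} {a b : ℝ}

lemma hasSubgaussianMGF_sum_sub_integral_pi (hf : Measurable f) (hab : ∀ z, f z ∈ Set.Icc a b) :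
    HasSubgaussianMGF (fun y : ι → Z => ∑ i, (f (y i) - ∫ z, f z ∂μ))
      (∑ _i : ι, (‖b - a‖₊ / 2) ^ 2) (Measure.pi fun _ => μ) := by
  refine HasSubgaussianMGF.sum_of_iIndepFun
    (iIndepFun_pi fun _ => (hf.sub_const (∫ z, f z ∂μ)).aemeasurable) fun i _ => ?_
  have hfi := hasSubgaussianMGF_of_mem_Icc (μ := Measure.pi fun _ : ι => μ)
    (hf.comp (measurable_pi_apply i)).aemeasurable (ae_of_all _ fun y => hab (y i))
  simp only [Function.comp_apply] at hfi
  rwa [integral_comp_eval (μ := fun _ => μ) hf.aestronglyMeasurable] at hfi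

lemma measure_pi_le_abs_sum_sub_integral (hf : Measurable f) (hab : ∀ z, f z ∈ Set.Icc a b)
    {t : ℝ} (ht : 0 ≤ t) :
    (Measure.pi fun _ : ι => μ) {y | t ≤ |∑ i, (f (y i) - ∫ z, f z ∂μ)|} ≤
      ENNReal.ofReal (2 * exp (-2 * t ^ 2 / (Fintype.card ι * (b - a) ^ 2))) := by
  have hS := hasSubgaussianMGF_sum_sub_integral_pi (ι := ι) (μ := μ) hf hab
  have hexp : -t ^ 2 / (2 * ((∑ _i : ι, (‖b - a‖₊ / 2) ^ 2 : NNReal) : ℝ)) =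
      -2 * t ^ 2 / (Fintype.card ι * (b - a) ^ 2) := by
    simp only [sum_const, card_univ, nsmul_eq_mul, NNReal.coe_mul, NNReal.coe_natCast,
      NNReal.coe_pow, NNReal.coe_div, coe_nnnorm, Real.norm_eq_abs, div_pow, sq_abs,
      NNReal.coe_ofNat]
    generalize (b - a) ^ 2 = d
    ring
  have hsplit : {y : ι → Z | t ≤ |∑ i, (f (y i) - ∫ z, f z ∂μ)|} ⊆
      {y | t ≤ ∑ i, (f (y i) - ∫ z, f z ∂μ)} ∪ {y | t ≤ -∑ i, (f (y i) - ∫ z, f z ∂μ)} :=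
    fun _ hy => by simpa only [Set.mem_union, Set.mem_ofPred] using le_abs.mp hy
  calc _ ≤ _ := measure_mono hsplit
    _ ≤ _ := measure_union_le _ _
    _ = ENNReal.ofReal ((Measure.pi fun _ : ι => μ).real {y | t ≤ ∑ i, (f (y i) - ∫ z, f z ∂μ)}
          + (Measure.pi fun _ : ι => μ).real {y | t ≤ -∑ i, (f (y i) - ∫ z, f z ∂μ)}) := by
        rw [ENNReal.ofReal_add measureReal_nonneg measureReal_nonneg, ofReal_measureReal,
          ofReal_measureReal]
    _ ≤ _ := by
        gcongr
        rw [two_mul, ← hexp]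
        exact add_le_add (hS.measure_ge_le ht) (hS.neg.measure_ge_le ht)

lemma measure_pi_lt_abs_average_sub_integral (hf : Measurable f) (hab : ∀ z, f z ∈ Set.Icc a b)
    {ε : ℝ} (hε : 0 ≤ ε) :
    (Measure.pi fun _ : ι => μ)
        {y | ε < |(1 / (Fintype.card ι : ℝ)) * ∑ i, f (y i) - ∫ z, f z ∂μ|} ≤
      ENNReal.ofReal (2 * exp (-2 * ε ^ 2 * Fintype.card ι / (b - a) ^ 2)) := by
  have hn : (0 : ℝ) ≤ Fintype.card ι := Nat.cast_nonneg _
  have hsub : {y : ι → Z | ε < |1 / (Fintype.card ι : ℝ) * ∑ i, f (y i) - ∫ z, f z ∂μ|} ⊆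
      {y | Fintype.card ι * ε ≤ |∑ i, (f (y i) - ∫ z, f z ∂μ)|} := by
    intro y hy
    rcases hn.eq_or_lt with hn0 | hn0
    · simp [← hn0]
    · have hsum : ∑ i, (f (y i) - ∫ z, f z ∂μ) =
          Fintype.card ι * (1 / (Fintype.card ι : ℝ) * ∑ i, f (y i) - ∫ z, f z ∂μ) := by
        rw [sum_sub_distrib, sum_const, card_univ, nsmul_eq_mul]
        field_simp
      rw [Set.mem_ofPred, hsum, abs_mul, abs_of_pos hn0]
      exact mul_le_mul_of_nonneg_left (le_of_lt hy) hn0.le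
  refine (measure_mono hsub).trans ((measure_pi_le_abs_sum_sub_integral hf hab
    (mul_nonneg hn hε)).trans_eq ?_)
  rcases hn.eq_or_lt with hn0 | hn0
  · simp [← hn0]
  · congr 3
    field_simp

lemma measure_pi_lt_abs_holdout_average_sub_integral [DecidableEq ι] {κ : Type*} [Fintype κ]
    (F : (κ → Z) × Z → ℝ) (hF : Measurable F) (hab : ∀ w z, F (w, z) ∈ Set.Icc a b)
    {σ : κ → ι} (hσ : Function.Injective σ) {ε : ℝ} (hε : 0 ≤ ε) :
    (Measure.pi fun _ : ι => μ)
        {s | ε < |(1 / ((Fintype.card ι : ℝ) - Fintype.card κ)) *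
            ∑ j ∈ univ.filter (fun j => j ∉ Set.range σ), F (s ∘ σ, s j) -
          ∫ z, F (s ∘ σ, z) ∂μ|} ≤
      ENNReal.ofReal
        (2 * exp (-2 * ε ^ 2 * ((Fintype.card ι : ℝ) - Fintype.card κ) / (b - a) ^ 2)) := by
  let p : ι → Prop := (· ∈ Set.range σ)
  let w : ({j // p j} → Z) → κ → Z := fun x i => x ⟨σ i, i, rfl⟩
  have hw : Measurable w := measurable_pi_lambda _ fun i => measurable_pi_apply _
  have hI : Measurable fun v : κ → Z => ∫ z, F (v, z) ∂μ :=
    hF.stronglyMeasurable.integral_prod_right'.measurable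
  have hcard : (Fintype.card {j // ¬p j} : ℝ) = Fintype.card ι - Fintype.card κ := by
    rw [Fintype.card_subtype_compl, Fintype.card_congr (Equiv.ofInjective σ hσ).symm,
      Nat.cast_sub (Fintype.card_le_of_injective σ hσ)]
  let B : Set (({j // p j} → Z) × ({j // ¬p j} → Z)) :=
    {xy | ε < |(1 / (Fintype.card {j // ¬p j} : ℝ)) * ∑ q, F (w xy.1, xy.2 q) -
      ∫ z, F (w xy.1, z) ∂μ|}
  have hB : MeasurableSet B := by
    have hw₁ : Measurable fun xy : ({j // p j} → Z) × ({j // ¬p j} → Z) => w xy.1 :=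
      hw.comp measurable_fst
    refine measurableSet_lt measurable_const
      (((Finset.measurable_sum _ fun q _ => ?_).const_mul _).sub (hI.comp hw₁)).abs
    exact hF.comp (hw₁.prodMk ((measurable_pi_apply q).comp measurable_snd))
  have hpre : {s : ι → Z | ε < |(1 / ((Fintype.card ι : ℝ) - Fintype.card κ)) *
      ∑ j ∈ univ.filter (fun j => j ∉ Set.range σ), F (s ∘ σ, s j) - ∫ z, F (s ∘ σ, z) ∂μ|} =
      MeasurableEquiv.piEquivPiSubtypeProd (fun _ => Z) p ⁻¹' B := by
    ext s
    rw [Set.mem_preimage, Set.mem_ofPred, Set.mem_ofPred, hcard,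
      sum_subtype (p := fun j => ¬p j) _ (fun j => by simp [p]) (fun j => F (s ∘ σ, s j))]
    rfl
  rw [hpre]
  refine measure_pi_preimage_piEquivPiSubtypeProd_le _ p hB fun x => ?_
  rw [← hcard]
  exact measure_pi_lt_abs_average_sub_integral (ι := {j // ¬p j}) (μ := μ)
    (hF.comp (measurable_prodMk_left (x := w x))) (hab (w x)) hε

end IIDSample

open Classical in
theorem agnostic_compression_generalization_general
    {Z : Type*} [MeasurableSpace Z] (μ : Measure Z) [IsProbabilityMeasure μ]
    (k m : ℕ)
    (F : (Fin k → Z) × Z → ℝ) (hF : Measurable F)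
    (hF0 : ∀ w z, 0 ≤ F (w, z)) (hF1 : ∀ w z, F (w, z) ≤ 1)
    (ε : ℝ) (hε : 0 < ε) :
    (Measure.pi fun _ : Fin m => μ)
      {s : Fin m → Z | ∃ σ : Fin k → Fin m, Function.Injective σ ∧
        ε < |(1 / ((m : ℝ) - k)) *
              ∑ j ∈ Finset.univ.filter (fun j : Fin m => j ∉ Set.range σ),
                F (s ∘ σ, s j) -
            ∫ z, F (s ∘ σ, z) ∂μ|} ≤
      ENNReal.ofReal (2 * (m : ℝ) ^ k * Real.exp (-2 * ε ^ 2 * ((m : ℝ) - k))) := by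
  have hdev := fun (σ : Fin k → Fin m) (hσ : Function.Injective σ) =>
    measure_pi_lt_abs_holdout_average_sub_integral (μ := μ) F hF
      (fun w z => ⟨hF0 w z, hF1 w z⟩) hσ hε.le
  simp only [Fintype.card_fin, sub_zero, one_pow, div_one] at hdev
  refine (measure_setOf_exists_le_card_mul hdev).trans_eq ?_
  rw [Fintype.card_fun, Fintype.card_fin, Fintype.card_fin, ← ENNReal.ofReal_natCast,
    ← ENNReal.ofReal_mul (Nat.cast_nonneg _), Nat.cast_pow]
  ring_nf

open Classical in
/-- Agnostic sample compression generalization (concentration form): if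
`F (w, z) ∈ [0,1]` is the loss at `z` of the predictor reconstructed from the
compression tuple `w`, then the probability, over an i.i.d. sample `s` of size
`m`, that for some injective compression map `σ : Fin k → Fin m` the empirical
error over the `m − k` points outside the compression set deviates from the true
error by more than `ε`, is at most `2 · m^k · exp(−2 ε² (m − k))`. -/
theorem agnostic_compression_generalization
    {Z : Type*} [MeasurableSpace Z] (μ : Measure Z) [IsProbabilityMeasure μ]
    (k m : ℕ) (hkm : k < m)
    (F : (Fin k → Z) × Z → ℝ) (hF : Measurable F)
    (hF0 : ∀ w z, 0 ≤ F (w, z)) (hF1 : ∀ w z, F (w, z) ≤ 1)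
    (ε : ℝ) (hε : 0 < ε) :
    (Measure.pi fun _ : Fin m => μ)
      {s : Fin m → Z | ∃ σ : Fin k → Fin m, Function.Injective σ ∧
        ε < |(1 / ((m : ℝ) - k)) *
              ∑ j ∈ Finset.univ.filter (fun j : Fin m => j ∉ Set.range σ),
                F (s ∘ σ, s j) -
            ∫ z, F (s ∘ σ, z) ∂μ|} ≤
      ENNReal.ofReal (2 * (m : ℝ) ^ k * Real.exp (-2 * ε ^ 2 * ((m : ℝ) - k))) :=
  agnostic_compression_generalization_general μ k m F hF hF0 hF1 ε hε
end

section
/- Agnostic-to-realizable reduction via a maximal realizable subsample: let Z be a type, S : Finset Z a sample, ι an index set of hypotheses, and ℓ : ι → Z → ℝ a loss with ℓ i z ∈ {0,1} for all i and z. Let S' ⊆ S be a subset of maximum cardinality among all subsets T ⊆ S for which there exists i ∈ ι with ℓ i z = 0 for every z ∈ T. Suppose a loss ℓ' : Z → ℝ satisfies 0 ≤ ℓ' z ≤ 1 for all z ∈ S and ℓ' z = 0 for all z ∈ S'. Then for every i ∈ ι, ∑_{z ∈ S} ℓ' z ≤ ∑_{z ∈ S} ℓ i z; in particular, the empirical error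 of any predictor that is correct on all of S' is at most the smallest empirical error achieved over ι. -/
open Finset

/-- Agnostic-to-realizable reduction via a maximal realizable subsample: if
`S' ⊆ S` is a subset of maximum cardinality on which some hypothesis has zero
(`{0,1}`-valued) loss, then every `[0,1]`-valued loss `ℓ'` vanishing on `S'` has
empirical sum over `S` at most that of every hypothesis `i`. -/
theorem agnostic_to_realizable_reduction
    {Z : Type*} {ι : Type*} (S : Finset Z) (ℓ : ι → Z → ℝ)
    (hℓ : ∀ i z, ℓ i z = 0 ∨ ℓ i z = 1)
    (S' : Finset Z) (hS'S : S' ⊆ S)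
    (hreal : ∃ i, ∀ z ∈ S', ℓ i z = 0)
    (hmax : ∀ T : Finset Z, T ⊆ S → (∃ i, ∀ z ∈ T, ℓ i z = 0) → T.card ≤ S'.card)
    (ℓ' : Z → ℝ) (hℓ'0 : ∀ z ∈ S, 0 ≤ ℓ' z) (hℓ'1 : ∀ z ∈ S, ℓ' z ≤ 1)
    (hℓ'S' : ∀ z ∈ S', ℓ' z = 0) :
    ∀ i, ∑ z ∈ S, ℓ' z ≤ ∑ z ∈ S, ℓ i z := by
  classical
  intro i
  set T : Finset Z := S.filter (fun z => ℓ i z = 0) with hT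
  have hTS : T ⊆ S := filter_subset _ _
  have hTcard : T.card ≤ S'.card :=
    hmax T hTS ⟨i, fun z hz => (mem_filter.mp hz).2⟩
  -- Sum of ℓ i over S is card of S \ T
  have hsum_i : ∑ z ∈ S, ℓ i z = ((S \ T).card : ℝ) := by
    rw [← sum_filter_add_sum_filter_not S (fun z => ℓ i z = 0)]
    have h1 : ∑ z ∈ S.filter (fun z => ℓ i z = 0), ℓ i z = 0 :=
      Finset.sum_eq_zero fun z hz => (mem_filter.mp hz).2
    have h2 : ∑ z ∈ S.filter (fun z => ¬ ℓ i z = 0), ℓ i z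
        = ((S.filter (fun z => ¬ ℓ i z = 0)).card : ℝ) := by
      rw [Finset.card_eq_sum_ones, Nat.cast_sum]
      refine Finset.sum_congr rfl fun z hz => ?_
      have := (hℓ i z).resolve_left (mem_filter.mp hz).2
      simp [this]
    rw [h1, h2, zero_add, sdiff_eq_filter, hT]
    norm_cast
    congr 1
    ext z
    simp only [mem_filter, not_and]
    tauto
  have hsum' : ∑ z ∈ S, ℓ' z ≤ ((S \ S').card : ℝ) := by
    rw [← sum_sdiff hS'S]
    have h0 : ∑ z ∈ S', ℓ' z = 0 := Finset.sum_eq_zero hℓ'S'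
    rw [h0, add_zero, Finset.card_eq_sum_ones, Nat.cast_sum]
    refine Finset.sum_le_sum fun z hz => ?_
    have hzS : z ∈ S := (mem_sdiff.mp hz).1
    simpa using hℓ'1 z hzS
  have hcard : (S \ S').card ≤ (S \ T).card := by
    rw [card_sdiff_of_subset hS'S, card_sdiff_of_subset hTS]
    omega
  calc ∑ z ∈ S, ℓ' z ≤ ((S \ S').card : ℝ) := hsum'
    _ ≤ ((S \ T).card : ℝ) := by exact_mod_cast hcard
    _ = ∑ z ∈ S, ℓ i z := hsum_i.symm
end

section
/- Existence of a small sparsified ensemble (probabilistic method with Hoeffding): let T, n, k ≥ 1 be natural numbers, let α : Fin T → ℝ be nonnegative weights with ∑ t, α t = 1, let θ ∈ (0, 1/2], and let B : Fin n → Fin T → Prop. Suppose that for every j : Fin n, ∑_{t ∈ {t | B j t}} α t ≤ 1/2 − θ. If k > (Real.log n) / (2 θ²), then there exists a tuple J : Fin k → Fin T such that for every j : Fin n, the number of indices i : Fin k with B j (J i) is strictly less than k/2. -/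
/-!
Sample `k` predictors i.i.d. from `α`. For a fixed point `j`, the number of sampled predictors
that err at `j` is a sum of `k` independent indicators with mean at most `1/2 - θ`, so by
Hoeffding's inequality it reaches `k/2` with probability at most `exp (-2θ²k)`. A union bound over
the `n` points bounds the failure probability by `n exp (-2θ²k) < 1`, so some `k`-tuple succeeds
at every point.
-/

open Finset MeasureTheory ProbabilityTheory Real

section Hoeffding

variable {Ω ι : Type*} [MeasurableSpace Ω] {μ : Measure Ω} [IsProbabilityMeasure μ] [Fintype ι]

theorem measureReal_sum_ge_le_of_iIndepFun_mem_Icc {X : ι → Ω → ℝ}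
    (h_indep : iIndepFun X μ) (hm : ∀ i, AEMeasurable (X i) μ)
    (hX : ∀ i, ∀ᵐ ω ∂μ, X i ω ∈ Set.Icc 0 1) {p θ : ℝ} (hp : ∀ i, μ[X i] ≤ p) (hθ : 0 ≤ θ) :
    μ.real {ω | Fintype.card ι * (p + θ) ≤ ∑ i, X i ω} ≤ exp (-2 * θ ^ 2 * Fintype.card ι) := by
  have h_centered := h_indep.comp (fun i x ↦ x - μ[X i]) fun i ↦ measurable_id.sub_const _
  have h_subG := fun i (_ : i ∈ univ) ↦ hasSubgaussianMGF_of_mem_Icc (hm i) (hX i)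
  have h := HasSubgaussianMGF.measure_sum_ge_le_of_iIndepFun h_centered h_subG
    (mul_nonneg (Nat.cast_nonneg (Fintype.card ι)) hθ)
  refine le_trans (measureReal_mono fun ω hω ↦ ?_) (h.trans_eq ?_)
  · simp only [Set.mem_ofPred_eq, Function.comp_apply, sum_sub_distrib] at hω ⊢
    have := sum_le_sum fun i (_ : i ∈ univ) ↦ hp i
    simp only [sum_const, card_univ, nsmul_eq_mul] at this
    linarith
  · rcases eq_or_ne (Fintype.card ι : ℝ) 0 with h0 | h0
    · simp [h0]
    · congr 1
      simp only [sub_zero, nnnorm_one, one_div, inv_pow, sum_const, card_univ, nsmul_eq_mul,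
        NNReal.coe_mul, NNReal.coe_natCast, NNReal.coe_inv, NNReal.coe_pow, NNReal.coe_ofNat,
        neg_mul]
      field_simp

end Hoeffding

theorem exists_forall_notMem_of_sum_measureReal_lt_one {Ω β : Type*} [MeasurableSpace Ω]
    {μ : Measure Ω} [IsProbabilityMeasure μ] [Fintype β] (s : β → Set Ω)
    (h : ∑ b, μ.real (s b) < 1) : ∃ ω, ∀ b, ω ∉ s b := by
  by_contra! hs
  have h_univ : (⋃ b, s b) = Set.univ := Set.eq_univ_of_forall fun ω ↦ Set.mem_iUnion.mpr (hs ω)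
  have := measureReal_iUnion_fintype_le (μ := μ) s
  simp only [h_univ, probReal_univ] at this
  linarith

section Sampling

variable {β ι : Type*} [MeasurableSpace β] {ν : Measure β} [IsProbabilityMeasure ν] [Fintype ι]

theorem measureReal_card_filter_mem_ge_half_le {S : Set β} (hS : MeasurableSet S)
    [DecidablePred (· ∈ S)] {θ : ℝ} (hνS : ν.real S ≤ 1 / 2 - θ) (hθ : 0 ≤ θ) :
    (Measure.pi fun _ : ι ↦ ν).real {ω | (Fintype.card ι : ℝ) / 2 ≤ #{i | ω i ∈ S}} ≤
      exp (-2 * θ ^ 2 * Fintype.card ι) := by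
  have hm : Measurable (S.indicator (1 : β → ℝ)) := measurable_one.indicator hS
  have h := measureReal_sum_ge_le_of_iIndepFun_mem_Icc
    (iIndepFun_pi (μ := fun _ : ι ↦ ν) fun _ ↦ hm.aemeasurable)
    (fun i ↦ (hm.comp (measurable_pi_apply i)).aemeasurable)
    (fun i ↦ ae_of_all _ fun ω ↦ ⟨Set.indicator_nonneg (fun _ _ ↦ zero_le_one) _,
      Set.indicator_le_self' (fun _ _ ↦ zero_le_one) _⟩)
    (fun i ↦ (integral_comp_eval hm.aestronglyMeasurable).trans_le
      ((integral_indicator_one hS).trans_le hνS)) hθ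
  refine le_trans (measureReal_mono fun ω hω ↦ ?_) h
  have hsum : ∑ i, S.indicator 1 (ω i) = (#{i | ω i ∈ S} : ℝ) := by
    simp [Set.indicator_apply]
  simp only [Set.mem_ofPred_eq, sub_add_cancel, hsum] at hω ⊢
  linarith

end Sampling

namespace PMF

variable {ι : Type*} [Fintype ι]

noncomputable def ofRealWeights (α : ι → ℝ) (hα0 : ∀ t, 0 ≤ α t) (hα1 : ∑ t, α t = 1) : PMF ι :=
  ofFintype (fun t ↦ ENNReal.ofReal (α t)) (by
    rw [← ENNReal.ofReal_sum_of_nonneg fun t _ ↦ hα0 t, hα1, ENNReal.ofReal_one])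

theorem toMeasure_ofRealWeights_real [MeasurableSpace ι] [MeasurableSingletonClass ι]
    (α : ι → ℝ) (hα0 : ∀ t, 0 ≤ α t) (hα1 : ∑ t, α t = 1) (S : Set ι) [DecidablePred (· ∈ S)] :
    (ofRealWeights α hα0 hα1).toMeasure.real S = ∑ t, if t ∈ S then α t else 0 := by
  rw [← integral_indicator_one S.toFinite.measurableSet, integral_eq_sum]
  simp [ofRealWeights, hα0, Set.indicator_apply]

end PMF

open Classical in
theorem sparsify_exists_general
    (T n k : ℕ)
    (α : Fin T → ℝ) (hα0 : ∀ t, 0 ≤ α t) (hα1 : ∑ t, α t = 1)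
    (θ : ℝ) (hθ0 : 0 < θ)
    (B : Fin n → Fin T → Prop)
    (hB : ∀ j, (∑ t, if B j t then α t else 0) ≤ 1 / 2 - θ)
    (hkbig : Real.log n / (2 * θ ^ 2) < (k : ℝ)) :
    ∃ J : Fin k → Fin T, ∀ j,
      ((Finset.univ.filter fun i : Fin k => B j (J i)).card : ℝ) < (k : ℝ) / 2 := by
  set ν := (PMF.ofRealWeights α hα0 hα1).toMeasure
  have h_tail (j : Fin n) := measureReal_card_filter_mem_ge_half_le (ι := Fin k) (ν := ν)
    (S := {t | B j t}) (Set.toFinite _).measurableSet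
    ((PMF.toMeasure_ofRealWeights_real α hα0 hα1 _).trans_le (hB j)) hθ0.le
  have h_log : Real.log n < 2 * θ ^ 2 * k := by
    rw [div_lt_iff₀ (by positivity)] at hkbig
    linarith
  obtain ⟨J, hJ⟩ := exists_forall_notMem_of_sum_measureReal_lt_one _ <| calc
    ∑ j, _ ≤ ∑ _j : Fin n, exp (-(2 * θ ^ 2 * k)) := sum_le_sum fun j _ ↦ by
          simpa using h_tail j
    _ = n * exp (-(2 * θ ^ 2 * k)) := by simp
    _ < exp (2 * θ ^ 2 * k) * exp (-(2 * θ ^ 2 * k)) := by gcongr; exact lt_exp_of_log_lt h_log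
    _ = 1 := by rw [← exp_add, add_neg_cancel, exp_zero]
  exact ⟨J, fun j ↦ by simpa using hJ j⟩

open Classical in
/-- Existence of a small sparsified ensemble: if each of `n` points has weighted
error mass at most `1/2 − θ` under the distribution `α` over `T` predictors, and
`k > log n / (2θ²)`, then there is a `k`-tuple of predictors such that at every
point, strictly fewer than `k/2` of them err. -/
theorem sparsify_exists
    (T n k : ℕ) (hT : 1 ≤ T) (hn : 1 ≤ n) (hk : 1 ≤ k)
    (α : Fin T → ℝ) (hα0 : ∀ t, 0 ≤ α t) (hα1 : ∑ t, α t = 1)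
    (θ : ℝ) (hθ0 : 0 < θ) (hθ1 : θ ≤ 1 / 2)
    (B : Fin n → Fin T → Prop)
    (hB : ∀ j, (∑ t, if B j t then α t else 0) ≤ 1 / 2 - θ)
    (hkbig : Real.log n / (2 * θ ^ 2) < (k : ℝ)) :
    ∃ J : Fin k → Fin T, ∀ j,
      ((Finset.univ.filter fun i : Fin k => B j (J i)).card : ℝ) < (k : ℝ) / 2 :=
  sparsify_exists_general T n k α hα0 hα1 θ hθ0 B hB hkbig
end
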